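/- Let X be a real random variable with differentiable density and finite positive Fisher information J(X), and for s > 0 let X_s = X + Z with Z ~ N(0, s) independent of X. Then J(X_s) ≤ 1/(1/J(X) + s), i.e. Fisher information decreases under Gaussian convolution at least as fast as the Stam bound predicts. -/

import Mathlib

open MeasureTheory Real

/-- Score function `ρ = p'/p` of a density `p` on `ℝ`. -/
noncomputable def score (p : ℝ → ℝ) (x : ℝ) : ℝ := deriv p x / p x

/-- Fisher information `J = E[ρ(X)²] = ∫ p ρ²` of a density `p` on `ℝ`. -/
noncomputable def fisherInfo (p : ℝ → ℝ) : ℝ := ∫ x, p x * (score p x) ^ 2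

/-- Density of the one-dimensional Gaussian `N(0, s)` for `s > 0`. -/
noncomputable def gauss1 (s x : ℝ) : ℝ :=
  (Real.sqrt (2 * Real.pi * s))⁻¹ * Real.exp (-(x ^ 2) / (2 * s))

/-- Density of `X_s = X + Z`, `Z ~ N(0, s)` independent of `X`, where `X` has density `p`:
the convolution of `p` with the Gaussian density. -/
noncomputable def pertG (p : ℝ → ℝ) (s : ℝ) (x : ℝ) : ℝ := ∫ y, p y * gauss1 s (x - y)


/-! For `a + b = 1` the score of `X + Z` at `x` is the conditional expectation of
`a ρ_X(X) + b ρ_Z(Z)` given `X + Z = x`: differentiating `p ⋆ g` and integrating by parts puts the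
derivative on either factor. Cauchy–Schwarz for this conditional law and an integration over `x`
give `J(X + Z) ≤ a² J(X) + b² J(Z) = a² J(X) + b² / s`, the cross term vanishing because the
Gaussian score has mean zero. The choice `a = J(X)⁻¹ / (J(X)⁻¹ + s)` turns this into the bound. -/

open ProbabilityTheory Convolution

section CauchySchwarz
variable {α : Type*} [MeasurableSpace α] {μ : Measure α} {w f : α → ℝ}

theorem sq_integral_mul_le_integral_mul_integral_mul_sq (hw : 0 ≤ᵐ[μ] w)
    (hwi : Integrable w μ) (hwf : Integrable (fun x => w x * f x) μ)
    (hwf2 : Integrable (fun x => w x * f x ^ 2) μ) :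
    (∫ x, w x * f x ∂μ) ^ 2 ≤ (∫ x, w x ∂μ) * ∫ x, w x * f x ^ 2 ∂μ := by
  have hquad : ∀ t : ℝ, 0 ≤ (∫ x, w x ∂μ) * (t * t) + (-2 * ∫ x, w x * f x ∂μ) * t
      + ∫ x, w x * f x ^ 2 ∂μ := fun t => by
    have hexpand : (fun x => w x * (f x - t) ^ 2)
        = fun x => (t * t) * w x + (-2 * t) * (w x * f x) + w x * f x ^ 2 := by
      ext x; ring
    have h0 : 0 ≤ ∫ x, w x * (f x - t) ^ 2 ∂μ :=
      integral_nonneg_of_ae (hw.mono fun x hx => mul_nonneg hx (sq_nonneg _))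
    rw [hexpand, integral_add (by exact (hwi.const_mul _).add (hwf.const_mul _)) hwf2,
      integral_add (hwi.const_mul _) (hwf.const_mul _), integral_const_mul,
      integral_const_mul] at h0
    linarith
  have := discrim_le_zero hquad
  rw [discrim] at this
  linarith

end CauchySchwarz

lemma mul_div_sq_le_of_sq_le_mul {q d A : ℝ} (hq : 0 ≤ q) (hA : 0 ≤ A) (h : d ^ 2 ≤ q * A) :
    q * (d / q) ^ 2 ≤ A := by
  rcases hq.eq_or_lt with rfl | hq
  · simpa using hA
  · rw [div_pow, mul_div_assoc', div_le_iff₀ (by positivity)]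
    nlinarith

section Score
variable {p : ℝ → ℝ}

lemma deriv_eq_mul_score (hp0 : ∀ x, 0 ≤ p x) (x : ℝ) : deriv p x = p x * score p x := by
  -- At a zero of `p ≥ 0` both sides vanish, whatever the junk value `score p x = deriv p x / 0`.
  by_cases h : p x = 0
  · have hmin : IsLocalMin p x := Filter.Eventually.of_forall fun y => h ▸ hp0 y
    rw [hmin.deriv_eq_zero, h, zero_mul]
  · rw [score, mul_div_cancel₀ _ h]

lemma measurable_score (hpm : Measurable p) : Measurable (score p) :=
  (measurable_deriv p).div hpm

lemma integrable_deriv_of_integrable_mul_score_sq (hp0 : ∀ x, 0 ≤ p x) (hp : Integrable p)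
    (hJ : Integrable (fun x => p x * score p x ^ 2)) : Integrable (deriv p) := by
  refine ((hp.add hJ).const_mul (1 / 2)).mono' (measurable_deriv p).aestronglyMeasurable
    (ae_of_all _ fun x => ?_)
  rw [deriv_eq_mul_score hp0 x, Real.norm_eq_abs, abs_mul, abs_of_nonneg (hp0 x), Pi.add_apply]
  have h := mul_nonneg (hp0 x) (sq_nonneg (|score p x| - 1))
  rw [sub_sq, sq_abs] at h
  linarith

end Score

section Convolution
variable {p g : ℝ → ℝ} {C C' : ℝ}

lemma integrable_mul_comp_sub {f k : ℝ → ℝ} (hf : Integrable f) (hk : Measurable k)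
    (hkC : ∀ u, ‖k u‖ ≤ C) (x : ℝ) : Integrable (fun y => f y * k (x - y)) :=
  hf.mul_bdd (hk.comp (measurable_const.sub measurable_id)).aestronglyMeasurable
    (ae_of_all _ fun y => hkC (x - y))

lemma hasDerivAt_convolution (hp : Integrable p) (hg : Differentiable ℝ g)
    (hgC : ∀ u, ‖g u‖ ≤ C) (hg'C : ∀ u, ‖deriv g u‖ ≤ C') (x : ℝ) :
    HasDerivAt (p ⋆ g) ((p ⋆ deriv g) x) x := by
  have hgm : Measurable g := hg.continuous.measurable
  refine (hasDerivAt_integral_of_dominated_loc_of_deriv_le (F := fun x y => p y * g (x - y))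
    (F' := fun x y => p y * deriv g (x - y))
    (bound := fun y => ‖p y‖ * C') (Metric.ball_mem_nhds x one_pos)
    (.of_forall fun x' => (integrable_mul_comp_sub hp hgm hgC x').aestronglyMeasurable)
    (integrable_mul_comp_sub hp hgm hgC x)
    (integrable_mul_comp_sub hp (measurable_deriv g) hg'C x).aestronglyMeasurable
    (ae_of_all _ fun y x' _ => ?_) (hp.norm.mul_const C') (ae_of_all _ fun y x' _ => ?_)).2
  · rw [norm_mul]
    exact mul_le_mul_of_nonneg_left (hg'C _) (norm_nonneg _)
  · exact ((hg (x' - y)).hasDerivAt.comp x' ((hasDerivAt_id x').sub_const y)).const_mul (p y)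
      |>.congr_deriv (by simp)

lemma convolution_deriv_left_eq (hpd : Differentiable ℝ p) (hp : Integrable p)
    (hp' : Integrable (deriv p)) (hg : Differentiable ℝ g)
    (hgC : ∀ u, ‖g u‖ ≤ C) (hg'C : ∀ u, ‖deriv g u‖ ≤ C') (x : ℝ) :
    (deriv p ⋆ g) x = (p ⋆ deriv g) x := by
  have hgm : Measurable g := hg.continuous.measurable
  have hleft := integrable_mul_comp_sub hp' hgm hgC x
  have hright := integrable_mul_comp_sub hp (measurable_deriv g) hg'C x
  have hderiv : ∀ y, HasDerivAt (fun y => p y * g (x - y))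
      (deriv p y * g (x - y) - p y * deriv g (x - y)) y := fun y => by
    have hgy := (hg (x - y)).hasDerivAt.comp y ((hasDerivAt_id y).const_sub x)
    exact ((hpd y).hasDerivAt.mul hgy).congr_deriv (by simp; ring)
  have h0 := integral_eq_zero_of_hasDerivAt_of_integrable hderiv (hleft.sub hright)
    (integrable_mul_comp_sub hp hgm hgC x)
  rwa [integral_sub hleft hright, sub_eq_zero] at h0

lemma mul_comp_sub_mul_score_eq (hp0 : ∀ x, 0 ≤ p x) (hg0 : ∀ u, 0 ≤ g u) (a b x y : ℝ) :
    p y * g (x - y) * (a * score p y + b * score g (x - y))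
      = a * (deriv p y * g (x - y)) + b * (p y * deriv g (x - y)) := by
  rw [deriv_eq_mul_score hp0, deriv_eq_mul_score hg0]
  ring

lemma deriv_convolution_eq_integral_mul_score (hp0 : ∀ x, 0 ≤ p x) (hpd : Differentiable ℝ p)
    (hp : Integrable p) (hp' : Integrable (deriv p)) (hg0 : ∀ u, 0 ≤ g u)
    (hg : Differentiable ℝ g) (hgC : ∀ u, ‖g u‖ ≤ C) (hg'C : ∀ u, ‖deriv g u‖ ≤ C')
    {a b : ℝ} (hab : a + b = 1) (x : ℝ) :
    deriv (p ⋆ g) x = ∫ y, p y * g (x - y) * (a * score p y + b * score g (x - y)) := by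
  have hibp : ∫ y, deriv p y * g (x - y) = ∫ y, p y * deriv g (x - y) :=
    convolution_deriv_left_eq hpd hp hp' hg hgC hg'C x
  have hderiv : deriv (p ⋆ g) x = ∫ y, p y * deriv g (x - y) :=
    (hasDerivAt_convolution hp hg hgC hg'C x).deriv
  simp_rw [mul_comp_sub_mul_score_eq hp0 hg0]
  rw [hderiv, integral_add
      ((integrable_mul_comp_sub hp' hg.continuous.measurable hgC x).const_mul a)
      ((integrable_mul_comp_sub hp (measurable_deriv g) hg'C x).const_mul b),
    integral_const_mul, integral_const_mul, hibp, ← add_mul, hab, one_mul]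

lemma convolution_mul_score_sq_le (hp0 : ∀ x, 0 ≤ p x) (hpd : Differentiable ℝ p)
    (hp : Integrable p) (hp' : Integrable (deriv p)) (hg0 : ∀ u, 0 ≤ g u)
    (hg : Differentiable ℝ g) (hgC : ∀ u, ‖g u‖ ≤ C) (hg'C : ∀ u, ‖deriv g u‖ ≤ C')
    {a b : ℝ} (hab : a + b = 1) (x : ℝ)
    (hsq : Integrable fun y => p y * g (x - y) * (a * score p y + b * score g (x - y)) ^ 2) :
    (p ⋆ g) x * score (p ⋆ g) x ^ 2
      ≤ ∫ y, p y * g (x - y) * (a * score p y + b * score g (x - y)) ^ 2 := by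
  have hw0 : ∀ y, 0 ≤ p y * g (x - y) := fun y => mul_nonneg (hp0 y) (hg0 _)
  have hw := integrable_mul_comp_sub hp hg.continuous.measurable hgC x
  have hwf : Integrable fun y => p y * g (x - y) * (a * score p y + b * score g (x - y)) := by
    simp_rw [mul_comp_sub_mul_score_eq hp0 hg0]
    exact ((integrable_mul_comp_sub hp' hg.continuous.measurable hgC x).const_mul a).add
      ((integrable_mul_comp_sub hp (measurable_deriv g) hg'C x).const_mul b)
  rw [score, deriv_convolution_eq_integral_mul_score hp0 hpd hp hp' hg0 hg hgC hg'C hab x]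
  refine mul_div_sq_le_of_sq_le_mul (integral_nonneg hw0)
    (integral_nonneg fun y => mul_nonneg (hw0 y) (sq_nonneg _)) ?_
  exact sq_integral_mul_le_integral_mul_integral_mul_sq (ae_of_all _ hw0) hw hwf hsq

end Convolution

section Gaussian
variable {s : ℝ}

lemma gauss1_nonneg (s u : ℝ) : 0 ≤ gauss1 s u := by
  unfold gauss1; positivity

lemma norm_gauss1_le (hs : 0 < s) (u : ℝ) : ‖gauss1 s u‖ ≤ (√(2 * π * s))⁻¹ := by
  rw [Real.norm_of_nonneg (gauss1_nonneg s u), gauss1]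
  refine mul_le_of_le_one_right (by positivity) (exp_le_one_iff.2 ?_)
  exact div_nonpos_of_nonpos_of_nonneg (neg_nonpos.2 (sq_nonneg u)) (by positivity)

lemma hasDerivAt_gauss1 (u : ℝ) : HasDerivAt (gauss1 s) (-s⁻¹ * u * gauss1 s u) u := by
  have hexp := (((hasDerivAt_pow 2 u).neg.div_const (2 * s)).exp).const_mul (√(2 * π * s))⁻¹
  simp only [Pi.neg_apply] at hexp
  refine hexp.congr_deriv ?_
  rw [gauss1]
  field_simp
  ring

lemma differentiable_gauss1 : Differentiable ℝ (gauss1 s) :=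
  fun u => (hasDerivAt_gauss1 u).differentiableAt

lemma score_gauss1 (hs : 0 < s) (u : ℝ) : score (gauss1 s) u = -s⁻¹ * u := by
  have hpos : 0 < gauss1 s u := by unfold gauss1; positivity
  rw [score, (hasDerivAt_gauss1 u).deriv, mul_div_cancel_right₀ _ hpos.ne']

lemma abs_mul_exp_neg_sq_div_le (hs : 0 < s) (u : ℝ) :
    |u| * exp (-u ^ 2 / (2 * s)) ≤ 1 + 2 * s := by
  -- `|u| ≤ 1 + u² ≤ (1 + 2s) (1 + u² / (2s)) ≤ (1 + 2s) exp (u² / (2s))`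
  have habs : |u| ≤ 1 + u ^ 2 := by nlinarith [sq_abs u, sq_nonneg (|u| - 1)]
  have hexp := add_one_le_exp (u ^ 2 / (2 * s))
  have hsplit : u ^ 2 = 2 * s * (u ^ 2 / (2 * s)) := by field_simp
  have hle : |u| ≤ (1 + 2 * s) * exp (u ^ 2 / (2 * s)) := by
    nlinarith [div_nonneg (sq_nonneg u) (by positivity : (0 : ℝ) ≤ 2 * s)]
  rw [neg_div, exp_neg, ← div_eq_mul_inv, div_le_iff₀ (exp_pos _)]
  exact hle

lemma norm_deriv_gauss1_le (hs : 0 < s) (u : ℝ) :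
    ‖deriv (gauss1 s) u‖ ≤ s⁻¹ * (√(2 * π * s))⁻¹ * (1 + 2 * s) := by
  rw [(hasDerivAt_gauss1 u).deriv, gauss1, Real.norm_eq_abs]
  have hbound := abs_mul_exp_neg_sq_div_le hs u
  calc |-s⁻¹ * u * ((√(2 * π * s))⁻¹ * exp (-u ^ 2 / (2 * s)))|
      = s⁻¹ * (√(2 * π * s))⁻¹ * (|u| * exp (-u ^ 2 / (2 * s))) := by
        rw [abs_mul, abs_mul, abs_mul, abs_neg, abs_of_pos (inv_pos.2 hs),
          abs_of_nonneg (by positivity : (0 : ℝ) ≤ (√(2 * π * s))⁻¹),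
          abs_of_pos (exp_pos _)]
        ring
    _ ≤ s⁻¹ * (√(2 * π * s))⁻¹ * (1 + 2 * s) := by gcongr

lemma gauss1_eq_gaussianPDFReal (hs : 0 ≤ s) : gauss1 s = gaussianPDFReal 0 s.toNNReal := by
  ext u; simp [gauss1, gaussianPDFReal_def, Real.coe_toNNReal _ hs]

lemma integral_gauss1_mul (hs : 0 < s) (f : ℝ → ℝ) :
    ∫ u, gauss1 s u * f u = ∫ u, f u ∂gaussianReal 0 s.toNNReal := by
  rw [integral_gaussianReal_eq_integral_smul (by simpa using hs), gauss1_eq_gaussianPDFReal hs.le]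
  rfl

lemma integrable_gauss1_mul_iff (hs : 0 < s) {f : ℝ → ℝ} :
    Integrable (fun u => gauss1 s u * f u) ↔ Integrable f (gaussianReal 0 s.toNNReal) := by
  rw [gaussianReal_of_var_ne_zero _ (by simpa using hs),
    integrable_withDensity_iff_integrable_smul' (measurable_gaussianPDF _ _)
      (ae_of_all _ fun _ ↦ gaussianPDF_lt_top)]
  simp [toReal_gaussianPDF, gauss1_eq_gaussianPDFReal hs.le]

lemma integrable_gauss1_mul_add_mul_sq (hs : 0 < s) (α β : ℝ) :
    Integrable (fun u => gauss1 s u * (α + β * u) ^ 2) :=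
  (integrable_gauss1_mul_iff hs).2
    ((memLp_const α).add ((memLp_id_gaussianReal 2).const_mul β)).integrable_sq

lemma integral_gauss1_mul_add_mul_sq (hs : 0 < s) (α β : ℝ) :
    ∫ u, gauss1 s u * (α + β * u) ^ 2 = α ^ 2 + β ^ 2 * s := by
  have h1 : Integrable (fun u : ℝ => u) (gaussianReal 0 s.toNNReal) :=
    (memLp_id_gaussianReal 1).integrable le_rfl
  have h2 : Integrable (fun u : ℝ => u ^ 2) (gaussianReal 0 s.toNNReal) :=
    (memLp_id_gaussianReal 2).integrable_sq
  have hmean : ∫ u, u ∂gaussianReal 0 s.toNNReal = 0 := integral_id_gaussianReal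
  have hvar : ∫ u, u ^ 2 ∂gaussianReal 0 s.toNNReal = s := by
    rw [← variance_of_integral_eq_zero aemeasurable_id' hmean, variance_fun_id_gaussianReal,
      Real.coe_toNNReal _ hs.le]
  have hexpand : ∀ u : ℝ, (α + β * u) ^ 2 = α ^ 2 + (2 * α * β) * u + β ^ 2 * u ^ 2 :=
    fun u => by ring
  simp_rw [integral_gauss1_mul hs, hexpand]
  rw [integral_add (by exact (integrable_const _).add (h1.const_mul _)) (h2.const_mul _),
    integral_add (integrable_const _) (h1.const_mul _), integral_const_mul, integral_const_mul,
    hmean, hvar]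
  simp

lemma integrable_gauss1_mul_add_mul_score_sq (hs : 0 < s) (α β : ℝ) :
    Integrable (fun u => gauss1 s u * (α + β * score (gauss1 s) u) ^ 2) := by
  simpa only [score_gauss1 hs, mul_assoc] using integrable_gauss1_mul_add_mul_sq hs α (β * -s⁻¹)

lemma integral_gauss1_mul_add_mul_score_sq (hs : 0 < s) (α β : ℝ) :
    ∫ u, gauss1 s u * (α + β * score (gauss1 s) u) ^ 2 = α ^ 2 + β ^ 2 / s := by
  simp_rw [score_gauss1 hs, ← mul_assoc, integral_gauss1_mul_add_mul_sq hs]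
  field_simp

end Gaussian

section Stam
variable {p : ℝ → ℝ} {s : ℝ}

/- `p y * gauss1 s (x - y)` is the joint density of `(X + Z, X)` at `(x, y)`, and the bracket is
`a ρ_X(X) + b ρ_Z(Z)` evaluated there. -/
noncomputable def stamIntegrand (p : ℝ → ℝ) (s a b x y : ℝ) : ℝ :=
  p y * gauss1 s (x - y) * (a * score p y + b * score (gauss1 s) (x - y)) ^ 2

lemma stamIntegrand_nonneg (hp0 : ∀ x, 0 ≤ p x) (a b x y : ℝ) : 0 ≤ stamIntegrand p s a b x y :=
  mul_nonneg (mul_nonneg (hp0 y) (gauss1_nonneg s _)) (sq_nonneg _)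

lemma integral_stamIntegrand_fst (hs : 0 < s) (a b y : ℝ) :
    ∫ x, stamIntegrand p s a b x y = a ^ 2 * (p y * score p y ^ 2) + b ^ 2 / s * p y := by
  simp_rw [stamIntegrand, mul_assoc (p y)]
  rw [integral_const_mul, integral_sub_right_eq_self
    (fun u => gauss1 s u * (a * score p y + b * score (gauss1 s) u) ^ 2),
    integral_gauss1_mul_add_mul_score_sq hs]
  ring

lemma integrable_stamIntegrand (hs : 0 < s) (hp0 : ∀ x, 0 ≤ p x) (hpm : Measurable p)
    (hp : Integrable p) (hJ : Integrable fun x => p x * score p x ^ 2) (a b : ℝ) :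
    Integrable (Function.uncurry (stamIntegrand p s a b)) (volume.prod volume) := by
  have hmeas : Measurable (Function.uncurry (stamIntegrand p s a b)) := by
    have := measurable_score hpm
    have := measurable_score (differentiable_gauss1 (s := s)).continuous.measurable
    have := (differentiable_gauss1 (s := s)).continuous.measurable
    unfold Function.uncurry stamIntegrand
    fun_prop
  refine (integrable_prod_iff' hmeas.aestronglyMeasurable).2 ⟨ae_of_all _ fun y => ?_, ?_⟩
  · simp_rw [Function.uncurry_apply_pair, stamIntegrand, mul_assoc (p y)]
    exact ((integrable_gauss1_mul_add_mul_score_sq hs _ b).comp_sub_right y).const_mul (p y)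
  · simp_rw [Function.uncurry_apply_pair, Real.norm_of_nonneg (stamIntegrand_nonneg hp0 _ _ _ _),
      integral_stamIntegrand_fst hs]
    exact (hJ.const_mul _).add (hp.const_mul _)

theorem fisherInfo_pertG_le (hs : 0 < s) (hp0 : ∀ x, 0 ≤ p x) (hpm : Measurable p)
    (hpd : Differentiable ℝ p) (hp1 : ∫ x, p x = 1) (hJ : Integrable fun x => p x * score p x ^ 2)
    {a b : ℝ} (hab : a + b = 1) :
    fisherInfo (pertG p s) ≤ a ^ 2 * fisherInfo p + b ^ 2 / s := by
  have hp : Integrable p := .of_integral_ne_zero (by simp [hp1])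
  have hp' := integrable_deriv_of_integrable_mul_score_sq hp0 hp hJ
  have hF := integrable_stamIntegrand hs hp0 hpm hp hJ a b
  calc fisherInfo (pertG p s)
      = ∫ x, (p ⋆ gauss1 s) x * score (p ⋆ gauss1 s) x ^ 2 := rfl
    _ ≤ ∫ x, ∫ y, stamIntegrand p s a b x y := by
      refine integral_mono_of_nonneg (ae_of_all _ fun x => ?_) hF.integral_prod_left ?_
      · exact mul_nonneg (integral_nonneg fun y => mul_nonneg (hp0 y) (gauss1_nonneg s _))
          (sq_nonneg _)
      · filter_upwards [hF.prod_right_ae] with x hx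
        exact convolution_mul_score_sq_le hp0 hpd hp hp' (gauss1_nonneg s) differentiable_gauss1
          (norm_gauss1_le hs) (norm_deriv_gauss1_le hs) hab x hx
    _ = ∫ y, ∫ x, stamIntegrand p s a b x y := integral_integral_swap hF
    _ = a ^ 2 * fisherInfo p + b ^ 2 / s := by
      simp_rw [integral_stamIntegrand_fst hs]
      rw [integral_add (hJ.const_mul _) (hp.const_mul _), integral_const_mul, integral_const_mul,
        hp1, mul_one, fisherInfo]

end Stam

theorem fisherInfo_gaussian_perturbation_le_general
    (p : ℝ → ℝ) (hp0 : ∀ x, 0 ≤ p x) (hpm : Measurable p) (hp1 : (∫ x, p x) = 1)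
    (hd : Differentiable ℝ p)
    (hJfin : Integrable (fun x => p x * (score p x) ^ 2))
    (s : ℝ) (hs : 0 < s) :
    fisherInfo (pertG p s) ≤ ((fisherInfo p)⁻¹ + s)⁻¹ := by
  set J := fisherInfo p
  have hJ : 0 ≤ J := integral_nonneg fun x => mul_nonneg (hp0 x) (sq_nonneg _)
  have hD : 0 < J⁻¹ + s := by positivity
  have hJJ : J⁻¹ ^ 2 * J = J⁻¹ := by
    rcases hJ.eq_or_lt with hJ0 | hJ0
    · simp [← hJ0]
    · field_simp
  calc fisherInfo (pertG p s)
      ≤ (J⁻¹ / (J⁻¹ + s)) ^ 2 * J + (s / (J⁻¹ + s)) ^ 2 / s :=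
        fisherInfo_pertG_le hs hp0 hpm hd hp1 hJfin (by field_simp)
    _ = (J⁻¹ + s)⁻¹ := by
        rw [div_pow, div_mul_eq_mul_div, hJJ]
        field_simp

/-- **Stam bound for Gaussian perturbations.**  For `X` with differentiable density and
finite positive Fisher information `J(X)`, and `X_s = X + N(0,s)` (independent noise,
`s > 0`), one has `J(X_s) ≤ 1/(1/J(X) + s)`. -/
theorem fisherInfo_gaussian_perturbation_le
    (p : ℝ → ℝ) (hp0 : ∀ x, 0 ≤ p x) (hpm : Measurable p) (hp1 : (∫ x, p x) = 1)
    (hd : Differentiable ℝ p)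
    (hJfin : Integrable (fun x => p x * (score p x) ^ 2))
    (hJpos : 0 < fisherInfo p)
    (s : ℝ) (hs : 0 < s) :
    fisherInfo (pertG p s) ≤ ((fisherInfo p)⁻¹ + s)⁻¹ :=
  fisherInfo_gaussian_perturbation_le_general p hp0 hpm hp1 hd hJfin s hs
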